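/- Let f : {0,1}^n → {0,1} be balanced and U_1,…,U_m unitaries yielding m mutually unbiased bases of C^{2^n}. With ρ_y = (1/(2^{n−1} m)) Σ_b Σ_{x ∈ f^{−1}(y)} U_b|x⟩⟨x|U_b†, the Helstrom success probability satisfies ½(1 + ½‖ρ₀ − ρ₁‖₁) ≤ ½ + 1/(2√m). -/

import Mathlib

open Matrix
open scoped ComplexOrder

/-- The square root of a positive semidefinite matrix, as in the older Mathlib
(`Matrix.PosSemidef.sqrt`, removed since): `U diag(√λ) Uᴴ`. -/
noncomputable def Matrix.PosSemidef.sqrt {n : Type*} [Fintype n] [DecidableEq n]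
    {𝕜 : Type*} [RCLike 𝕜] {A : Matrix n n 𝕜} (hA : A.PosSemidef) : Matrix n n 𝕜 :=
  hA.1.eigenvectorUnitary.1 * diagonal ((↑) ∘ Real.sqrt ∘ hA.1.eigenvalues) *
    (star hA.1.eigenvectorUnitary : Matrix n n 𝕜)

/-- The trace norm `‖A‖₁ = Tr √(AᴴA)`. -/
noncomputable def traceNorm {ι : Type*} [Fintype ι] [DecidableEq ι]
    (A : Matrix ι ι ℂ) : ℝ :=
  ((Matrix.posSemidef_conjTranspose_mul_self A).sqrt.trace).re

/-- The average state `ρ_y = (1/(2^{n-1} m)) Σ_b Σ_{x ∈ f⁻¹(y)} U_b |x⟩⟨x| U_b†`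
for a Boolean function `f` encoded in `m` bases. -/
noncomputable def rhoAvg (n m : ℕ)
    (U : Fin m → Matrix (Fin n → Bool) (Fin n → Bool) ℂ)
    (f : (Fin n → Bool) → Bool) (y : Bool) :
    Matrix (Fin n → Bool) (Fin n → Bool) ℂ :=
  ((2 ^ (n - 1) * m : ℂ))⁻¹ •
    ∑ b, ∑ x ∈ Finset.univ.filter (fun x => f x = y),
      U b * Matrix.single x x 1 * (U b)ᴴ

/-!
Write `ρ₀ - ρ₁ = c • ∑_b U_b D U_bᴴ` with `D = diag((-1)^{f x})` and `c = (2^{n-1} m)⁻¹`; since `f`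
is balanced, `Tr D = 0`. In `Tr((ρ₀ - ρ₁)ᴴ(ρ₀ - ρ₁))` every cross term `b ≠ b'` equals
`2⁻ⁿ |Tr D|² = 0` because the bases are unbiased, so the trace is `c² m 2ⁿ`. Cauchy–Schwarz on
the singular values then gives `‖ρ₀ - ρ₁‖₁² ≤ 2ⁿ · c² m 2ⁿ = 4 / m`.
-/

section TraceNorm

variable {ι : Type*} [Fintype ι] [DecidableEq ι]

lemma traceNorm_eq_sum_sqrt_eigenvalues (A : Matrix ι ι ℂ) :
    traceNorm A = ∑ i, √((posSemidef_conjTranspose_mul_self A).1.eigenvalues i) := by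
  rw [traceNorm, PosSemidef.sqrt, trace_mul_cycle, Unitary.coe_star_mul_self, one_mul]
  simp [trace_diagonal]

theorem traceNorm_sq_le_card_mul_re_trace (A : Matrix ι ι ℂ) :
    traceNorm A ^ 2 ≤ Fintype.card ι * (Aᴴ * A).trace.re := by
  have hP := posSemidef_conjTranspose_mul_self A
  rw [traceNorm_eq_sum_sqrt_eigenvalues, hP.1.trace_eq_sum_eigenvalues]
  calc _ ≤ _ := sq_sum_le_card_mul_sum_sq
    _ = _ := by simp [Real.sq_sqrt (hP.eigenvalues_nonneg _)]

end TraceNorm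

section Unbiased

variable {ι κ 𝕜 : Type*} [Fintype ι] [Fintype κ] [DecidableEq κ] [RCLike 𝕜]

lemma trace_conj_diagonal_conjTranspose_mul (U W : Matrix ι κ 𝕜) (d e : κ → 𝕜) :
    ((U * diagonal d * Uᴴ)ᴴ * (W * diagonal e * Wᴴ)).trace =
      ∑ i, ∑ j, star (d i) * e j * (‖(Uᴴ * W) i j‖ ^ 2 : ℝ) := by
  set V := Uᴴ * W
  have hcycle : ((U * diagonal d * Uᴴ)ᴴ * (W * diagonal e * Wᴴ)).trace =
      (diagonal (star d) * V * diagonal e * Vᴴ).trace := by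
    rw [show (U * diagonal d * Uᴴ)ᴴ * (W * diagonal e * Wᴴ) =
        U * (diagonal (star d) * V * diagonal e * Wᴴ) by
      simp only [V, conjTranspose_mul, conjTranspose_conjTranspose, diagonal_conjTranspose,
        Matrix.mul_assoc], trace_mul_comm]
    simp only [V, conjTranspose_mul, conjTranspose_conjTranspose, Matrix.mul_assoc]
  rw [hcycle]
  simp only [trace, diag, mul_apply (M := diagonal (star d) * V * diagonal e), mul_diagonal,
    diagonal_mul, conjTranspose_apply]
  refine Finset.sum_congr rfl fun i _ => Finset.sum_congr rfl fun j _ => ?_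
  rw [RCLike.ofReal_pow, ← RCLike.mul_conj]
  simp only [Pi.star_apply, RCLike.star_def]
  ring

lemma trace_conj_diagonal_conjTranspose_mul_self {U : Matrix ι κ 𝕜} (hU : Uᴴ * U = 1)
    (d e : κ → 𝕜) :
    ((U * diagonal d * Uᴴ)ᴴ * (U * diagonal e * Uᴴ)).trace = ∑ i, star (d i) * e i := by
  rw [trace_conj_diagonal_conjTranspose_mul, hU]
  refine Finset.sum_congr rfl fun i _ => ?_
  rw [Finset.sum_eq_single i (fun j _ hji => by simp [one_apply_ne' hji]) (by simp)]
  simp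

lemma trace_conj_diagonal_conjTranspose_mul_eq_zero {U W : Matrix ι κ 𝕜} {c : ℝ}
    (hUW : ∀ i j, ‖(Uᴴ * W) i j‖ ^ 2 = c) (d : κ → 𝕜) {e : κ → 𝕜} (he : ∑ j, e j = 0) :
    ((U * diagonal d * Uᴴ)ᴴ * (W * diagonal e * Wᴴ)).trace = 0 := by
  simp only [trace_conj_diagonal_conjTranspose_mul, hUW, ← Finset.sum_mul, ← Finset.mul_sum, he,
    mul_zero, zero_mul, Finset.sum_const_zero]

theorem trace_conjTranspose_mul_self_sum_conj_diagonal {β : Type*} [Fintype β]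
    {U : β → Matrix ι κ 𝕜} (hU : ∀ b, (U b)ᴴ * U b = 1) {c : ℝ}
    (hmub : ∀ b b', b ≠ b' → ∀ i j, ‖((U b)ᴴ * U b') i j‖ ^ 2 = c)
    {d : κ → 𝕜} (hd : ∑ i, d i = 0) :
    ((∑ b, U b * diagonal d * (U b)ᴴ)ᴴ * ∑ b, U b * diagonal d * (U b)ᴴ).trace =
      ((Fintype.card β * ∑ i, ‖d i‖ ^ 2 : ℝ) : 𝕜) := by
  have hrow : ∀ b, ∑ b', ((U b * diagonal d * (U b)ᴴ)ᴴ * (U b' * diagonal d * (U b')ᴴ)).trace =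
      ((∑ i, ‖d i‖ ^ 2 : ℝ) : 𝕜) := by
    intro b
    rw [Finset.sum_eq_single b
      (fun b' _ hb' => trace_conj_diagonal_conjTranspose_mul_eq_zero (hmub b b' hb'.symm) d hd)
      (by simp), trace_conj_diagonal_conjTranspose_mul_self (hU b)]
    simp [RCLike.conj_mul]
  simp only [conjTranspose_sum, Finset.sum_mul_sum, trace_sum, hrow]
  simp

end Unbiased

section Balanced

variable {α : Type*} [Fintype α] {f : α → Bool} {k : ℕ}

lemma card_eq_two_mul_of_card_fiber_eq
    (hf : ∀ y, (Finset.univ.filter (fun x => f x = y)).card = k) :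
    Fintype.card α = 2 * k := by
  rw [← Finset.card_univ, Finset.card_eq_sum_card_fiberwise (f := f) (t := Finset.univ) (by simp)]
  simp [hf, two_mul]

lemma sum_sign_eq_zero_of_card_fiber_eq {R : Type*} [Ring R]
    (hf : ∀ y, (Finset.univ.filter (fun x => f x = y)).card = k) :
    ∑ x, (if f x then -1 else 1 : R) = 0 := by
  rw [← Finset.sum_fiberwise' Finset.univ f (fun y => if y then (-1 : R) else 1)]
  simp [hf]

end Balanced

lemma sum_filter_single_one_eq_diagonal {ι α : Type*} [Fintype ι] [DecidableEq ι] [Semiring α]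
    (p : ι → Prop) [DecidablePred p] :
    ∑ x ∈ Finset.univ.filter p, single x x (1 : α) = diagonal (fun x => if p x then 1 else 0) := by
  rw [← sum_single_eq_diagonal, Finset.sum_filter]
  refine Finset.sum_congr rfl fun x _ => ?_
  split_ifs <;> simp

lemma rhoAvg_false_sub_rhoAvg_true (n m : ℕ)
    (U : Fin m → Matrix (Fin n → Bool) (Fin n → Bool) ℂ) (f : (Fin n → Bool) → Bool) :
    rhoAvg n m U f false - rhoAvg n m U f true = ((2 ^ (n - 1) * m : ℂ))⁻¹ •
      ∑ b, U b * diagonal (fun x => if f x then -1 else 1) * (U b)ᴴ := by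
  have hsign : diagonal (fun x => if f x then (-1 : ℂ) else 1) =
      diagonal (fun x => if f x = false then 1 else 0) -
        diagonal (fun x => if f x = true then 1 else 0) := by
    rw [diagonal_sub]
    congr
    ext x
    cases f x <;> simp
  rw [rhoAvg, rhoAvg, ← smul_sub, ← Finset.sum_sub_distrib, hsign]
  congr 1
  refine Finset.sum_congr rfl fun b _ => ?_
  simp only [← Finset.mul_sum, ← Finset.sum_mul, sum_filter_single_one_eq_diagonal, mul_sub,
    sub_mul]

lemma trace_conjTranspose_mul_self_rhoAvg_sub {n m : ℕ} {f : (Fin n → Bool) → Bool}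
    (hf : ∀ y, (Finset.univ.filter (fun x => f x = y)).card = 2 ^ (n - 1))
    {U : Fin m → Matrix (Fin n → Bool) (Fin n → Bool) ℂ} (hU : ∀ b, (U b)ᴴ * U b = 1)
    (hmub : ∀ b b', b ≠ b' → ∀ x x', ‖((U b)ᴴ * U b') x x'‖ ^ 2 = ((2 : ℝ) ^ n)⁻¹) :
    ((rhoAvg n m U f false - rhoAvg n m U f true)ᴴ *
      (rhoAvg n m U f false - rhoAvg n m U f true)).trace =
        ((2 / (2 ^ (n - 1) * m) : ℝ) : ℂ) := by
  have hsign : ∀ x, ‖if f x then (-1 : ℂ) else 1‖ = 1 := fun x => by cases f x <;> simp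
  rw [rhoAvg_false_sub_rhoAvg_true, conjTranspose_smul, Matrix.smul_mul, Matrix.mul_smul,
    trace_smul, trace_smul, trace_conjTranspose_mul_self_sum_conj_diagonal hU hmub
      (sum_sign_eq_zero_of_card_fiber_eq hf)]
  simp only [star_inv₀, star_mul', star_natCast, star_pow, star_ofNat, hsign, one_pow,
    Finset.sum_const, Finset.card_univ, Fintype.card_fin, card_eq_two_mul_of_card_fiber_eq hf,
    nsmul_eq_mul, mul_one, smul_eq_mul]
  push_cast
  rcases eq_or_ne (m : ℂ) 0 with hm | hm
  · simp [hm]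
  · field_simp

theorem helstrom_le_balanced_mubs_general
    {n m : ℕ}
    (f : (Fin n → Bool) → Bool)
    (hf : ∀ y, (Finset.univ.filter (fun x => f x = y)).card = 2 ^ (n - 1))
    (U : Fin m → Matrix (Fin n → Bool) (Fin n → Bool) ℂ)
    (hU : ∀ b, (U b)ᴴ * U b = 1 ∧ U b * (U b)ᴴ = 1)
    (hmub : ∀ b b', b ≠ b' → ∀ x x',
      ‖((U b)ᴴ * U b') x x'‖ ^ 2 = ((2 : ℝ) ^ n)⁻¹) :
    (1/2 : ℝ) * (1 + (1/2) * traceNorm (rhoAvg n m U f false - rhoAvg n m U f true))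
      ≤ 1/2 + 1/(2 * Real.sqrt m) := by
  set A := rhoAvg n m U f false - rhoAvg n m U f true
  have hbound : traceNorm A ^ 2 ≤ 4 / m := by
    have := traceNorm_sq_le_card_mul_re_trace A
    rw [trace_conjTranspose_mul_self_rhoAvg_sub hf (fun b => (hU b).1) hmub, Complex.ofReal_re,
      card_eq_two_mul_of_card_fiber_eq hf] at this
    refine this.trans_eq ?_
    push_cast
    field_simp
    ring
  have htraceNorm : traceNorm A ≤ 2 / √m :=
    calc traceNorm A ≤ |traceNorm A| := le_abs_self _
      _ ≤ √(4 / m) := Real.abs_le_sqrt hbound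
      _ = 2 / √m := by
        rw [Real.sqrt_div' _ (Nat.cast_nonneg m), show (4 : ℝ) = 2 ^ 2 by norm_num,
          Real.sqrt_sq zero_le_two]
  linarith [show (2 / √m) / 4 = 1 / (2 * √m) by ring]

/-- For a balanced Boolean function `f` on `n`-bit strings encoded in `m`
mutually unbiased bases, the Helstrom success probability satisfies
`½(1 + ½‖ρ₀ − ρ₁‖₁) ≤ ½ + 1/(2√m)`. -/
theorem helstrom_le_balanced_mubs
    {n m : ℕ} (hn : 1 ≤ n) (hm : 1 ≤ m)
    (f : (Fin n → Bool) → Bool)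
    (hf : ∀ y, (Finset.univ.filter (fun x => f x = y)).card = 2 ^ (n - 1))
    (U : Fin m → Matrix (Fin n → Bool) (Fin n → Bool) ℂ)
    (hU : ∀ b, (U b)ᴴ * U b = 1 ∧ U b * (U b)ᴴ = 1)
    (hmub : ∀ b b', b ≠ b' → ∀ x x',
      ‖((U b)ᴴ * U b') x x'‖ ^ 2 = ((2 : ℝ) ^ n)⁻¹) :
    (1/2 : ℝ) * (1 + (1/2) * traceNorm (rhoAvg n m U f false - rhoAvg n m U f true))
      ≤ 1/2 + 1/(2 * Real.sqrt m) :=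
  helstrom_le_balanced_mubs_general f hf U hU hmub
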